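/- arXiv:1803.00908 — 2 statements merged into one kernel-verified Lean document; each statement's English description precedes it below -/
import Mathlib

section
/- Let G be a loopless multigraph on n vertices with ordered degree sequence d_1 ≥ d_2 ≥ … ≥ d_n, maximum multiplicity μ(G) and minimum multiplicity μ_min(G). Assume d_1 − d_2 ≥ μ(G) − μ_min(G) ≥ 2. Then χ'(G) = Δ(G) if n is even, and χ'(G) ≤ Δ(G) + μ_min(G) if n is odd. -/
/-!
Write `G = H + μ_min(G) • K_n`. Since `K_n` is `(n - 1)`-edge-colourable for even `n` and
`n`-edge-colourable for odd `n`, it suffices to colour `H` with `k = Δ(G) - μ_min(G) (n - 1)`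
colours. Every multiplicity of `H` is at most `M = μ(G) - μ_min(G)`, the vertex of maximum
degree has degree `k` in `H`, and by the degree gap every other vertex has degree at most
`k - M`. Such a multigraph is `k`-edge-colourable: build it up one edge at a time, adding the
edges at the heavy vertex last, each time by Vizing's fan argument, which extends a
`k`-colouring of `F - xy` to `F` whenever `d(x) ≤ k` and `μ(xz) + d(z) ≤ k` for all `z ≠ x`.
When a fan gets stuck, a swap of two colours on a component of the subgraph they span frees a
colour; such a component is connected with maximum degree two, so the two colours are missing
at most twice in total on it.
-/

open Finset Filter Asymptotics

namespace GS

variable {V : Type*}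

/-- A loopless multigraph on `V`, given by a symmetric multiplicity function
with zero diagonal. -/
def IsMultigraph (G : V → V → ℕ) : Prop :=
  (∀ u v, G u v = G v u) ∧ ∀ v, G v v = 0

/-- The degree of a vertex (edges counted with multiplicity). -/
def mdeg [Fintype V] (G : V → V → ℕ) (v : V) : ℕ := ∑ u, G v u

/-- The maximum degree `Δ(G)`. -/
def maxDeg [Fintype V] (G : V → V → ℕ) : ℕ := Finset.univ.sup (mdeg G)

/-- The number of edges (with multiplicity) with both endpoints in `S`. -/
def edgesIn [DecidableEq V] (G : V → V → ℕ) (S : Finset V) : ℕ :=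
  (∑ v ∈ S, ∑ u ∈ S, G v u) / 2

/-- A proper `k`-edge-colouring: every copy of an edge gets a colour
(`(c u v).card = G u v`), symmetric, and edge copies sharing a vertex get
distinct colours. -/
def IsProperEdgeColoring [Fintype V] (G : V → V → ℕ) (k : ℕ)
    (c : V → V → Finset (Fin k)) : Prop :=
  (∀ u v, c u v = c v u) ∧ (∀ u v, (c u v).card = G u v) ∧
    ∀ v u w, u ≠ w → Disjoint (c v u) (c v w)

/-- `G` admits a proper `k`-edge-colouring. -/
def Colorable [Fintype V] (G : V → V → ℕ) (k : ℕ) : Prop :=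
  ∃ c : V → V → Finset (Fin k), IsProperEdgeColoring G k c

/-- The chromatic index `χ'(G)`. -/
noncomputable def chromIndex [Fintype V] (G : V → V → ℕ) : ℕ :=
  sInf {k | Colorable G k}

/-- `ρ(S) = e(G[S]) / ⌊|S|/2⌋`. -/
noncomputable def rhoS [DecidableEq V] (G : V → V → ℕ) (S : Finset V) : ℝ :=
  (edgesIn G S : ℝ) / ((S.card / 2 : ℕ) : ℝ)

/-- `ρ(G)`, the maximum of `ρ(S)` over all `S` with `|S| ≥ 2`. -/
noncomputable def rho [Fintype V] [DecidableEq V] (G : V → V → ℕ) : ℝ :=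
  sSup {r : ℝ | ∃ S : Finset V, 2 ≤ S.card ∧ r = rhoS G S}

/-- The maximum edge multiplicity `μ(G)`. -/
def muMax [Fintype V] [DecidableEq V] (G : V → V → ℕ) : ℕ :=
  Finset.univ.sup fun p : V × V => if p.1 = p.2 then 0 else G p.1 p.2

/-- The minimum edge multiplicity `μ_min(G)` (over pairs of distinct vertices). -/
noncomputable def muMin (G : V → V → ℕ) : ℕ :=
  sInf {t | ∃ u v : V, u ≠ v ∧ G u v = t}

/-- The second largest degree `d₂`. -/
def secondDeg [Fintype V] [DecidableEq V] (G : V → V → ℕ) : ℕ :=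
  Finset.univ.sup fun p : V × V => if p.1 = p.2 then 0 else min (mdeg G p.1) (mdeg G p.2)

/-- Unordered pairs of distinct vertices of `[n]`. -/
abbrev NDPair (n : ℕ) := {p : Sym2 (Fin n) // ¬ p.IsDiag}

/-- An outcome of the random multigraph process `M(n,m)`: a choice of one of
the pairs for each of the `m` rounds. -/
abbrev MGOutcome (n m : ℕ) := Fin m → NDPair n

/-- The multiplicity function of the multigraph produced by an outcome. -/
def mgGraph {n m : ℕ} (ω : MGOutcome n m) : Fin n → Fin n → ℕ := fun u v =>
  (Finset.univ.filter fun i => (ω i : Sym2 (Fin n)) = s(u, v)).card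

/-- The number of times the pair `p` was chosen. -/
def pairCount {n m : ℕ} (ω : MGOutcome n m) (p : NDPair n) : ℕ :=
  (Finset.univ.filter fun i => ω i = p).card

/-- The probability, under the uniform measure `M(n,m)`, of the event `P`. -/
noncomputable def mgProb (n m : ℕ) (P : MGOutcome n m → Prop) : ℝ :=
  (Nat.card {ω : MGOutcome n m // P ω} : ℝ) / (Nat.card (MGOutcome n m) : ℝ)

end GS

open GS Filter


namespace GS

variable {V : Type*} {k : ℕ} {G : V → V → ℕ} {c : V → V → Finset (Fin k)}

section Multigraphs

lemma IsMultigraph.sub {H : V → V → ℕ} (hG : IsMultigraph G) (hH : ∀ u v, H u v = H v u) :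
    IsMultigraph (G - H) :=
  ⟨fun u v => by simp only [Pi.sub_apply, hG.1 u v, hH u v], fun v => by simp [hG.2 v]⟩

lemma muMin_le {u v : V} (h : u ≠ v) : muMin G ≤ G u v :=
  Nat.sInf_le ⟨u, v, h, rfl⟩

variable [Fintype V]

lemma mdeg_add (G H : V → V → ℕ) (z : V) : mdeg (G + H) z = mdeg G z + mdeg H z :=
  sum_add_distrib

lemma mdeg_nsmul (μ : ℕ) (G : V → V → ℕ) (z : V) : mdeg (μ • G) z = μ * mdeg G z := by
  simp [mdeg, mul_sum]

lemma le_muMax [DecidableEq V] {u v : V} (h : u ≠ v) : G u v ≤ muMax G :=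
  calc G u v = (fun p : V × V => if p.1 = p.2 then 0 else G p.1 p.2) (u, v) := by simp [h]
    _ ≤ muMax G := le_sup (f := fun p : V × V => if p.1 = p.2 then 0 else G p.1 p.2)
      (mem_univ (u, v))

end Multigraphs

section Colorings

variable [Fintype V]

def free (c : V → V → Finset (Fin k)) (z : V) : Finset (Fin k) := (univ.biUnion (c z))ᶜ

lemma mem_free {z : V} {a : Fin k} : a ∈ free c z ↔ ∀ w, a ∉ c z w := by
  simp [free]

namespace IsProperEdgeColoring

lemma symm (hc : IsProperEdgeColoring G k c) (u v : V) : c u v = c v u := hc.1 u v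

lemma card_eq (hc : IsProperEdgeColoring G k c) (u v : V) : (c u v).card = G u v := hc.2.1 u v

lemma disjoint (hc : IsProperEdgeColoring G k c) (v : V) {u w : V} (h : u ≠ w) :
    Disjoint (c v u) (c v w) :=
  hc.2.2 v u w h

variable (hc : IsProperEdgeColoring G k c)
include hc

lemma eq_of_mem {z u w : V} {a : Fin k} (hu : a ∈ c z u) (hw : a ∈ c z w) : u = w := by
  by_contra h
  exact disjoint_left.1 (hc.disjoint z h) hu hw

lemma eq_of_sym2_eq {u v x y : V} (h : s(u, v) = s(x, y)) : c u v = c x y := by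
  rcases Sym2.eq_iff.1 h with ⟨rfl, rfl⟩ | ⟨rfl, rfl⟩
  · rfl
  · exact hc.symm u v

lemma card_biUnion (z : V) : (univ.biUnion (c z)).card = mdeg G z := by
  rw [Finset.card_biUnion fun u _ w _ h => hc.disjoint z h]
  exact sum_congr rfl fun u _ => hc.card_eq z u

lemma mdeg_le (z : V) : mdeg G z ≤ k := by
  simpa [hc.card_biUnion] using card_le_univ (univ.biUnion (c z))

lemma card_free (z : V) : (free c z).card = k - mdeg G z := by
  rw [free, card_compl, Fintype.card_fin, hc.card_biUnion]

end IsProperEdgeColoring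

lemma colorable_zero (k : ℕ) : Colorable (0 : V → V → ℕ) k :=
  ⟨fun _ _ => ∅, fun _ _ => rfl, fun _ _ => rfl, fun _ _ _ _ => disjoint_empty_left _⟩

lemma Colorable.maxDeg_le (h : Colorable G k) : maxDeg G ≤ k :=
  let ⟨_, hc⟩ := h
  Finset.sup_le fun z _ => hc.mdeg_le z

lemma chromIndex_le (h : Colorable G k) : chromIndex G ≤ k :=
  Nat.sInf_le h

lemma chromIndex_eq_maxDeg (h : Colorable G (maxDeg G)) : chromIndex G = maxDeg G :=
  (chromIndex_le h).antisymm (Nat.sInf_mem (s := {k | Colorable G k}) ⟨_, h⟩).maxDeg_le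

lemma Colorable.add {A B : V → V → ℕ} {k₁ k₂ : ℕ} (hA : Colorable A k₁) (hB : Colorable B k₂) :
    Colorable (A + B) (k₁ + k₂) := by
  obtain ⟨c₁, hc₁⟩ := hA
  obtain ⟨c₂, hc₂⟩ := hB
  refine ⟨fun u v => ((c₁ u v).disjSum (c₂ u v)).map finSumFinEquiv.toEmbedding,
    fun u v => by simp only [hc₁.symm u v, hc₂.symm u v], fun u v => ?_, fun v u w huw => ?_⟩
  · rw [card_map, card_disjSum, hc₁.card_eq, hc₂.card_eq, Pi.add_apply, Pi.add_apply]
  · rw [Finset.disjoint_map, disjoint_left]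
    rintro (g | g) h₁ h₂ <;> simp only [inl_mem_disjSum, inr_mem_disjSum] at h₁ h₂
    · exact disjoint_left.1 (hc₁.disjoint v huw) h₁ h₂
    · exact disjoint_left.1 (hc₂.disjoint v huw) h₁ h₂

lemma Colorable.nsmul (hG : Colorable G k) (t : ℕ) : Colorable (t • G) (t * k) := by
  induction t with
  | zero => simpa using colorable_zero 0
  | succ t ih =>
    rw [succ_nsmul, Nat.succ_mul]
    exact ih.add hG

end Colorings

section Recoloring

variable [DecidableEq V]

def singleEdge (x y : V) : V → V → ℕ := fun u v => if s(u, v) = s(x, y) then 1 else 0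

def updatePair (c : V → V → Finset (Fin k)) (x y : V) (t : Finset (Fin k)) :
    V → V → Finset (Fin k) :=
  fun u v => if s(u, v) = s(x, y) then t else c u v

def recolor (c : V → V → Finset (Fin k)) (x w : V) (b g : Fin k) : V → V → Finset (Fin k) :=
  updatePair c x w (insert g ((c x w).erase b))

lemma updatePair_of_ne {x y u v : V} {t : Finset (Fin k)} (h : s(u, v) ≠ s(x, y)) :
    updatePair c x y t u v = c u v :=
  if_neg h

lemma singleEdge_comm (x y : V) : singleEdge x y = singleEdge y x := by
  ext u v
  simp only [singleEdge, Sym2.eq_swap (a := x)]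

lemma sub_singleEdge_add {x y : V} (hG : IsMultigraph G) (hxy : 0 < G x y) :
    G - singleEdge x y + singleEdge x y = G := by
  ext u v
  simp only [Pi.add_apply, Pi.sub_apply, singleEdge]
  split_ifs with h
  · rcases Sym2.eq_iff.1 h with ⟨rfl, rfl⟩ | ⟨rfl, rfl⟩
    · omega
    · rw [hG.1] at hxy
      omega
  · rfl

variable [Fintype V]

lemma mdeg_singleEdge_left (x y : V) : mdeg (singleEdge x y) x = 1 := by
  simp only [mdeg, singleEdge, Sym2.congr_right]
  simp

lemma free_updatePair_of_ne {x y z : V} {t : Finset (Fin k)} (hx : z ≠ x) (hy : z ≠ y) :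
    free (updatePair c x y t) z = free c z := by
  ext a
  simp only [mem_free]
  refine forall_congr' fun w => ?_
  rw [updatePair_of_ne]
  simp [hx, hy]

namespace IsProperEdgeColoring

variable (hc : IsProperEdgeColoring G k c)
include hc

lemma updatePair {x y : V} {t : Finset (Fin k)} {G' : V → V → ℕ}
    (hx : ∀ z, z ≠ y → Disjoint t (c x z)) (hy : ∀ z, z ≠ x → Disjoint t (c y z))
    (hcard : ∀ u v, (updatePair c x y t u v).card = G' u v) :
    IsProperEdgeColoring G' k (updatePair c x y t) := by
  refine ⟨fun u v => by simp only [GS.updatePair, Sym2.eq_swap, hc.symm u v], hcard,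
    fun v u w huw => ?_⟩
  have key : ∀ u w, u ≠ w → s(v, u) = s(x, y) → Disjoint t (c v w) := by
    rintro u w huw h
    rcases Sym2.eq_iff.1 h with ⟨rfl, rfl⟩ | ⟨rfl, rfl⟩
    · exact hx w huw.symm
    · exact hy w huw.symm
  simp only [GS.updatePair]
  split_ifs with h₁ h₂ h₂
  · exact absurd (Sym2.congr_right.1 (h₁.trans h₂.symm)) huw
  · exact key u w huw h₁
  · exact (key w u huw.symm h₂).symm
  · exact hc.disjoint v huw

lemma colorable_add_singleEdge {x y : V} {g : Fin k} (hgx : g ∈ free c x)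
    (hgy : g ∈ free c y) : Colorable (G + singleEdge x y) k := by
  refine ⟨_, hc.updatePair (x := x) (y := y) (t := insert g (c x y)) (fun z hz => ?_)
    (fun z hz => ?_) fun u v => ?_⟩
  · exact disjoint_insert_left.2 ⟨mem_free.1 hgx z, hc.disjoint x hz.symm⟩
  · rw [hc.symm x y]
    exact disjoint_insert_left.2 ⟨mem_free.1 hgy z, hc.disjoint y hz.symm⟩
  · simp only [GS.updatePair, Pi.add_apply, singleEdge]
    split_ifs with h
    · rw [card_insert_of_notMem (mem_free.1 hgx y), ← hc.eq_of_sym2_eq h, hc.card_eq]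
    · rw [hc.card_eq, add_zero]

variable {x w : V} {b g : Fin k} (hb : b ∈ c x w) (hgx : g ∈ free c x)
include hb hgx

lemma recolor (hgw : g ∈ free c w) : IsProperEdgeColoring G k (recolor c x w b g) := by
  refine hc.updatePair (fun z hz => ?_) (fun z hz => ?_) fun u v => ?_
  · refine disjoint_insert_left.2 ⟨mem_free.1 hgx z, ?_⟩
    exact disjoint_of_subset_left (erase_subset _ _) (hc.disjoint x hz.symm)
  · refine disjoint_insert_left.2 ⟨mem_free.1 hgw z, ?_⟩
    rw [hc.symm x w]
    exact disjoint_of_subset_left (erase_subset _ _) (hc.disjoint w hz.symm)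
  · simp only [GS.updatePair]
    split_ifs with h
    · rw [card_insert_of_notMem fun hg => mem_free.1 hgx w (mem_of_mem_erase hg),
        card_erase_add_one hb, ← hc.eq_of_sym2_eq h, hc.card_eq]
    · exact hc.card_eq u v

lemma mem_free_recolor : b ∈ free (GS.recolor c x w b g) x := by
  have hgb : g ≠ b := by rintro rfl; exact mem_free.1 hgx w hb
  refine mem_free.2 fun w' => ?_
  by_cases h : s(x, w') = s(x, w)
  · simp [GS.recolor, GS.updatePair, h, hgb.symm]
  · rw [GS.recolor, updatePair_of_ne h]
    exact fun hb' => h (congrArg _ (hc.eq_of_mem hb' hb))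

end IsProperEdgeColoring

end Recoloring

/-! ### Fans -/

section Fans

variable [Fintype V]

/-- A fan at `x`. Unlike in Vizing's original fan, the colour `b l` on the pair `x (y l)` may
be missing at any earlier fan vertex `y (f l)`, not only at `y (l - 1)`. -/
structure IsFan (c : V → V → Finset (Fin k)) (x : V) (t : ℕ) (y : ℕ → V) (f : ℕ → ℕ)
    (b : ℕ → Fin k) : Prop where
  injOn : ∀ i ≤ t, ∀ j ≤ t, y i = y j → i = j
  ne_center : ∀ i ≤ t, y i ≠ x
  parent_lt : ∀ l, 0 < l → l ≤ t → f l < l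
  mem_free_parent : ∀ l, 0 < l → l ≤ t → b l ∈ free c (y (f l))
  mem_center : ∀ l, 0 < l → l ≤ t → b l ∈ c x (y l)

namespace IsFan

variable {x : V} {t : ℕ} {y : ℕ → V} {f : ℕ → ℕ} {b : ℕ → Fin k}

lemma mono (hfan : IsFan c x t y f b) {t' : ℕ} (ht : t' ≤ t) : IsFan c x t' y f b where
  injOn i hi j hj := hfan.injOn i (hi.trans ht) j (hj.trans ht)
  ne_center i hi := hfan.ne_center i (hi.trans ht)
  parent_lt l hl hlt := hfan.parent_lt l hl (hlt.trans ht)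
  mem_free_parent l hl hlt := hfan.mem_free_parent l hl (hlt.trans ht)
  mem_center l hl hlt := hfan.mem_center l hl (hlt.trans ht)

lemma snoc (hfan : IsFan c x t y f b) {j : ℕ} {w : V} {g : Fin k} (hj : j ≤ t)
    (hg : g ∈ free c (y j)) (hgw : g ∈ c x w) (hwx : w ≠ x) (hw : ∀ i ≤ t, y i ≠ w) :
    IsFan c x (t + 1) (Function.update y (t + 1) w) (Function.update f (t + 1) j)
      (Function.update b (t + 1) g) := by
  refine ⟨fun i hi i' hi' h => ?_, fun i hi => ?_, fun l hl hlt => ?_, fun l hl hlt => ?_,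
    fun l hl hlt => ?_⟩
  · simp only [Function.update_apply] at h
    split_ifs at h with h₁ h₂ h₂
    · omega
    · exact absurd h.symm (hw i' (by omega))
    · exact absurd h (hw i (by omega))
    · exact hfan.injOn i (by omega) i' (by omega) h
  all_goals simp only [Function.update_apply]
  · split_ifs
    · exact hwx
    · exact hfan.ne_center i (by omega)
  · split_ifs
    · omega
    · exact hfan.parent_lt l hl (by omega)
  · have := hfan.parent_lt l hl
    split_ifs with h₁ h₂ h₂
    · omega
    · exact hg
    · omega
    · exact hfan.mem_free_parent l hl (by omega)
  · split_ifs
    · exact hgw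
    · exact hfan.mem_center l hl (by omega)

/-- Otherwise the colours missing on the fan would inject into the colours on the edges from `x`
to the fan, of which there are fewer. -/
theorem exists_not_disjoint_free (hc : IsProperEdgeColoring G k c) (hfan : IsFan c x t y f b)
    (hsat : ∀ j ≤ t, ∀ g ∈ free c (y j), ∃ m ≤ t, g ∈ c x (y m))
    (hz : ∀ z, z ≠ x → G x z ≤ (free c z).card) (hy : G x (y 0) < (free c (y 0)).card) :
    ∃ i ≤ t, ∃ j ≤ t, i ≠ j ∧ ¬ Disjoint (free c (y i)) (free c (y j)) := by
  by_contra! hdisj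
  have hmem : ∀ {i}, i ∈ range (t + 1) ↔ i ≤ t := by simp
  have hle : ∑ i ∈ range (t + 1), (free c (y i)).card ≤ ∑ i ∈ range (t + 1), G x (y i) :=
    calc ∑ i ∈ range (t + 1), (free c (y i)).card
        = ((range (t + 1)).biUnion fun i => free c (y i)).card :=
          (card_biUnion fun i hi j hj hij => hdisj i (hmem.1 hi) j (hmem.1 hj) hij).symm
      _ ≤ ((range (t + 1)).biUnion fun i => c x (y i)).card := by
          refine card_le_card fun g hg => ?_
          obtain ⟨i, hi, hgi⟩ := mem_biUnion.1 hg
          obtain ⟨m, hm, hgm⟩ := hsat i (hmem.1 hi) g hgi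
          exact mem_biUnion.2 ⟨m, hmem.2 hm, hgm⟩
      _ = ∑ i ∈ range (t + 1), G x (y i) := by
          rw [card_biUnion fun i hi j hj hij => hc.disjoint x fun h =>
            hij (hfan.injOn i (hmem.1 hi) j (hmem.1 hj) h)]
          exact sum_congr rfl fun i _ => hc.card_eq x (y i)
  have hlt : ∑ i ∈ range (t + 1), G x (y i) < ∑ i ∈ range (t + 1), (free c (y i)).card :=
    sum_lt_sum (fun i hi => hz _ (hfan.ne_center i (hmem.1 hi))) ⟨0, by simp, hy⟩
  omega

variable [DecidableEq V]

lemma updatePair (hfan : IsFan c x t y f b) {w : V} {s : Finset (Fin k)}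
    (hw : ∀ i ≤ t, y i ≠ w) : IsFan (updatePair c x w s) x t y f b where
  injOn := hfan.injOn
  ne_center := hfan.ne_center
  parent_lt := hfan.parent_lt
  mem_free_parent l hl hlt := by
    have hfl : f l ≤ t := (hfan.parent_lt l hl hlt).le.trans hlt
    rw [free_updatePair_of_ne (hfan.ne_center _ hfl) (hw _ hfl)]
    exact hfan.mem_free_parent l hl hlt
  mem_center l hl hlt := by
    rw [updatePair_of_ne (mt Sym2.congr_right.1 (hw l hlt))]
    exact hfan.mem_center l hl hlt

/-- Shifting the fan: recolouring `x (y t)` from `b t` to `g` frees `b t` at `x`, and `b t` is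
missing at the parent `y (f t)`, so the argument continues from there down to `y 0`. -/
theorem colorable_of_mem_free (hc : IsProperEdgeColoring G k c) (hfan : IsFan c x t y f b)
    {g : Fin k} (hgx : g ∈ free c x) (hgy : g ∈ free c (y t)) :
    Colorable (G + singleEdge x (y 0)) k := by
  induction t using Nat.strong_induction_on generalizing c g with
  | _ t ih =>
    rcases Nat.eq_zero_or_pos t with rfl | ht
    · exact hc.colorable_add_singleEdge hgx hgy
    have hbt := hfan.mem_center t ht le_rfl
    have hft := hfan.parent_lt t ht le_rfl
    have hfan' : IsFan (recolor c x (y t) (b t) g) x (f t) y f b :=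
      (hfan.mono hft.le).updatePair fun i hi hyi =>
        (hfan.injOn i (hi.trans hft.le) t le_rfl hyi ▸ hi).not_gt hft
    refine ih (f t) hft (hc.recolor hbt hgx hgy) hfan' (hc.mem_free_recolor hbt hgx) ?_
    rw [recolor, free_updatePair_of_ne (hfan.ne_center _ hft.le)
      fun h => hft.ne (hfan.injOn _ hft.le t le_rfl h)]
    exact hfan.mem_free_parent t ht le_rfl

lemma add_two_le_card (hfan : IsFan c x t y f b) : t + 2 ≤ Fintype.card V := by
  have hinj : Set.InjOn y (range (t + 1)) := fun i hi j hj h =>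
    hfan.injOn i (Nat.lt_succ_iff.1 (mem_range.1 hi)) j (Nat.lt_succ_iff.1 (mem_range.1 hj)) h
  have hx : x ∉ (range (t + 1)).image y := by
    simp only [mem_image, mem_range, not_exists, not_and]
    exact fun i hi => hfan.ne_center i (Nat.lt_succ_iff.1 hi)
  calc t + 2 = (insert x ((range (t + 1)).image y)).card := by
        rw [card_insert_of_notMem hx, card_image_of_injOn hinj, card_range]
    _ ≤ Fintype.card V := card_le_univ _

/-- Take a longest fan starting at `y₀`: a colour missing at a fan vertex but on no fan edge
either lies on a new edge at `x`, which extends the fan, or is missing at `x`, which lets the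
fan shift. -/
theorem exists_saturated [NeZero k] (hc : IsProperEdgeColoring G k c) (hxx : G x x = 0) {y₀ : V}
    (hxy : x ≠ y₀) (hno : ¬ Colorable (G + singleEdge x y₀) k) :
    ∃ t y f b, IsFan c x t y f b ∧ y 0 = y₀ ∧
      ∀ j ≤ t, ∀ g ∈ free c (y j), ∃ m ≤ t, g ∈ c x (y m) := by
  classical
  let P : ℕ → Prop := fun t => ∃ y f b, IsFan c x t y f b ∧ y 0 = y₀
  have hP0 : P 0 := ⟨fun _ => y₀, fun _ => 0, fun _ => 0,
    ⟨fun i hi j hj _ => by omega, fun _ _ => hxy.symm, fun l hl hlt => by omega,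
      fun l hl hlt => by omega, fun l hl hlt => by omega⟩, rfl⟩
  obtain ⟨y, f, b, hfan, hy0⟩ := Nat.findGreatest_spec (n := Fintype.card V) (Nat.zero_le _) hP0
  refine ⟨_, y, f, b, hfan, hy0, fun j hj g hg => ?_⟩
  by_contra! hnew
  by_cases hw : ∃ w, g ∈ c x w
  · obtain ⟨w, hw⟩ := hw
    have hwx : w ≠ x := by
      intro h
      rw [h, card_eq_zero.1 ((hc.card_eq x x).trans hxx)] at hw
      exact absurd hw (notMem_empty g)
    have hfan' := hfan.snoc hj hg hw hwx fun i hi h => hnew i hi (h ▸ hw)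
    have hP : P (Nat.findGreatest P (Fintype.card V) + 1) :=
      ⟨_, _, _, hfan', by rwa [Function.update_of_ne (by omega)]⟩
    have := hfan'.add_two_le_card
    exact Nat.findGreatest_is_greatest (Nat.lt_succ_self _) (by omega) hP
  · exact hno (hy0 ▸ (hfan.mono hj).colorable_of_mem_free hc (mem_free.2 (not_exists.1 hw)) hg)

end IsFan

end Fans

/-! ### Kempe chains -/

section Kempe

variable {a b : Fin k}

def kempeGraph (c : V → V → Finset (Fin k)) (a b : Fin k) : SimpleGraph V :=
  SimpleGraph.fromRel fun u v => a ∈ c u v ∨ b ∈ c u v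

def IsKempeClosed (c : V → V → Finset (Fin k)) (S : Set V) (a b : Fin k) : Prop :=
  ∀ u ∈ S, ∀ v ∉ S, a ∉ c u v ∧ b ∉ c u v

lemma isKempeClosed_reachable (z : V) :
    IsKempeClosed c {w | (kempeGraph c a b).Reachable z w} a b := by
  intro u hu v hv
  have hadj : a ∈ c u v ∨ b ∈ c u v → (kempeGraph c a b).Adj u v := fun h =>
    (SimpleGraph.fromRel_adj _ _ _).2 ⟨fun huv => hv (huv ▸ hu), Or.inl h⟩
  exact ⟨fun h => hv (hu.trans (hadj (Or.inl h)).reachable),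
    fun h => hv (hu.trans (hadj (Or.inr h)).reachable)⟩

open Classical in
noncomputable def kempeSwap (c : V → V → Finset (Fin k)) (S : Set V) (a b : Fin k) :
    V → V → Finset (Fin k) :=
  fun u v => if u ∈ S ∧ v ∈ S then (c u v).map (Equiv.swap a b).toEmbedding else c u v

section kempeSwap

variable {S : Set V} {u v : V}

lemma kempeSwap_of_notMem (hu : u ∉ S) : kempeSwap c S a b u v = c u v :=
  if_neg fun h => hu h.1

/-- On an edge leaving the closed set `S` the swap has nothing to do. -/
lemma kempeSwap_of_mem (hS : IsKempeClosed c S a b) (hu : u ∈ S) :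
    kempeSwap c S a b u v = (c u v).map (Equiv.swap a b).toEmbedding := by
  unfold kempeSwap
  split_ifs with h
  · rfl
  · obtain ⟨ha, hb⟩ := hS u hu v fun hv => h ⟨hu, hv⟩
    ext g
    rw [mem_map_equiv, Equiv.symm_swap]
    rcases eq_or_ne g a with rfl | hga
    · simp [ha, hb]
    rcases eq_or_ne g b with rfl | hgb
    · simp [ha, hb]
    rw [Equiv.swap_apply_of_ne_of_ne hga hgb]

variable [Fintype V]

lemma free_kempeSwap_of_notMem (hu : u ∉ S) : free (kempeSwap c S a b) u = free c u := by
  ext g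
  simp only [mem_free, kempeSwap_of_notMem hu]

lemma mem_free_kempeSwap (hS : IsKempeClosed c S a b) (hu : u ∈ S) {g : Fin k} :
    g ∈ free (kempeSwap c S a b) u ↔ Equiv.swap a b g ∈ free c u := by
  simp only [mem_free, kempeSwap_of_mem hS hu, mem_map_equiv, Equiv.symm_swap]

lemma IsProperEdgeColoring.kempeSwap (hc : IsProperEdgeColoring G k c)
    (hS : IsKempeClosed c S a b) : IsProperEdgeColoring G k (kempeSwap c S a b) := by
  refine ⟨fun u v => ?_, fun u v => ?_, fun v u w huw => ?_⟩
  · by_cases hu : u ∈ S <;> by_cases hv : v ∈ S <;> simp [GS.kempeSwap, hu, hv, hc.symm u v]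
  · by_cases hu : u ∈ S
    · rw [kempeSwap_of_mem hS hu, card_map, hc.card_eq]
    · rw [kempeSwap_of_notMem hu, hc.card_eq]
  · by_cases hv : v ∈ S
    · rw [kempeSwap_of_mem hS hv, kempeSwap_of_mem hS hv, Finset.disjoint_map]
      exact hc.disjoint v huw
    · rw [kempeSwap_of_notMem hv, kempeSwap_of_notMem hv]
      exact hc.disjoint v huw

end kempeSwap

variable [Fintype V]

lemma IsProperEdgeColoring.kempeGraph_adj (hc : IsProperEdgeColoring G k c) {u v : V} :
    (kempeGraph c a b).Adj u v ↔ u ≠ v ∧ (a ∈ c u v ∨ b ∈ c u v) := by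
  rw [kempeGraph, SimpleGraph.fromRel_adj, hc.symm v u, or_self]

lemma IsProperEdgeColoring.card_neighborFinset_kempeGraph_le
    (hc : IsProperEdgeColoring G k c) (u : V) [Fintype ((kempeGraph c a b).neighborSet u)] :
    ((kempeGraph c a b).neighborFinset u).card ≤ ({a, b} \ free c u).card := by
  classical
  refine (card_le_card_biUnion (f := fun w => c u w ∩ {a, b})
    (fun w _ w' _ h => disjoint_of_subset_left inter_subset_left
      (disjoint_of_subset_right inter_subset_left (hc.disjoint u h))) fun w hw => ?_).trans
    (card_le_card ?_)
  · obtain ⟨-, h⟩ := hc.kempeGraph_adj.1 ((SimpleGraph.mem_neighborFinset _ _ _).1 hw)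
    rcases h with h | h
    · exact ⟨a, by simp [h]⟩
    · exact ⟨b, by simp [h]⟩
  · intro g hg
    obtain ⟨w, -, hgw⟩ := mem_biUnion.1 hg
    obtain ⟨hgw, hgab⟩ := mem_inter.1 hgw
    exact mem_sdiff.2 ⟨hgab, fun hfree => mem_free.1 hfree w hgw⟩

/-- A Kempe component is connected, so it has at least as many edges as vertices minus one,
while each vertex `u` has degree at most `2 - |{a, b} ∩ free c u|`. -/
theorem IsProperEdgeColoring.sum_card_inter_free_le_two (hc : IsProperEdgeColoring G k c)
    (hab : a ≠ b) {z : V} {s : Finset V} (hs : ∀ u ∈ s, (kempeGraph c a b).Reachable z u) :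
    ∑ u ∈ s, ({a, b} ∩ free c u).card ≤ 2 := by
  classical
  set K := kempeGraph c a b
  set C := K.connectedComponentMk z
  have hsum : ∀ F : V → ℕ, ∑ u ∈ s, F u ≤ ∑ v : C, F v := by
    intro F
    rw [← sum_subtype (univ.filter (· ∈ C)) (p := (· ∈ C)) (by simp)]
    exact sum_le_sum_of_subset fun u hu =>
      mem_filter.2 ⟨mem_univ u, SimpleGraph.ConnectedComponent.sound (hs u hu).symm⟩
  have hvert := C.connected_toSimpleGraph.card_vert_le_card_edgeSet_add_one
  have hdeg := C.toSimpleGraph.sum_degrees_eq_twice_card_edges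
  have hdeg' : ∀ v : C, C.toSimpleGraph.degree v ≤ ({a, b} \ free c v).card := fun v => by
    have := SimpleGraph.degree_induce_of_neighborSet_subset (G := K) (s := C.supp) (v := v)
      fun w hw => C.mem_supp_of_adj_mem_supp v.2 hw
    calc C.toSimpleGraph.degree v = K.degree v := by convert this using 2 <;> rfl
      _ ≤ _ := (K.card_neighborFinset_eq_degree v).symm.trans_le
        (hc.card_neighborFinset_kempeGraph_le v)
  have hsplit : ∀ v : V, ({a, b} ∩ free c v).card + ({a, b} \ free c v).card = 2 := fun v => by
    rw [card_inter_add_card_sdiff, card_pair hab]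
  have h1 := sum_le_sum fun v (_ : v ∈ univ) => hdeg' v
  have h2 : ∑ v : C, (({a, b} ∩ free c v).card + ({a, b} \ free c v).card) = 2 * Nat.card C := by
    simp [hsplit, mul_comm]
  rw [sum_add_distrib] at h2
  simp only [Nat.card_eq_fintype_card, ← SimpleGraph.edgeFinset_card] at hvert h2
  have := hsum fun v => ({a, b} ∩ free c v).card
  omega

variable [DecidableEq V]

lemma IsProperEdgeColoring.not_reachable_of_mem_free (hc : IsProperEdgeColoring G k c)
    (hab : a ≠ b) {z₁ z₂ z₃ : V} (h₁₂ : z₁ ≠ z₂) (h₁₃ : z₁ ≠ z₃) (h₂₃ : z₂ ≠ z₃)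
    (ha : a ∈ free c z₁) (hb₂ : b ∈ free c z₂) (hb₃ : b ∈ free c z₃)
    (hr : (kempeGraph c a b).Reachable z₁ z₂) : ¬ (kempeGraph c a b).Reachable z₁ z₃ := by
  intro hr'
  have hpos : ∀ {g u}, g ∈ ({a, b} : Finset (Fin k)) → g ∈ free c u →
      0 < ({a, b} ∩ free c u).card := fun hg hu => card_pos.2 ⟨_, mem_inter.2 ⟨hg, hu⟩⟩
  have := hc.sum_card_inter_free_le_two hab (s := {z₁, z₂, z₃}) (z := z₁) (by simp [hr, hr'])
  rw [sum_insert (by simp [h₁₂, h₁₃]), sum_insert (by simp [h₂₃]), sum_singleton] at this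
  have := hpos (by simp) ha
  have := hpos (by simp) hb₂
  have := hpos (by simp) hb₃
  omega

/-- Interchanging `a` and `g` on `S` keeps the fan intact and makes `a` missing at `y j` as
well as at `x`. -/
theorem IsFan.colorable_of_kempeSwap {x : V} {t : ℕ} {y : ℕ → V} {f : ℕ → ℕ} {b : ℕ → Fin k}
    (hc : IsProperEdgeColoring G k c) (hfan : IsFan c x t y f b)
    {g : Fin k} (hax : a ∈ free c x) {S : Set V} (hS : IsKempeClosed c S a g) (hxS : x ∉ S)
    {j : ℕ} (hj : j ≤ t) (hyj : y j ∈ S) (hgy : g ∈ free c (y j))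
    (hpar : ∀ l, 0 < l → l ≤ j → b l = g → y (f l) ∉ S) :
    Colorable (G + singleEdge x (y 0)) k := by
  have hfan' : IsFan (kempeSwap c S a g) x j y f b :=
    { hfan.mono hj with
      mem_free_parent := fun l hl hlj => by
        have hfree := hfan.mem_free_parent l hl (hlj.trans hj)
        by_cases hmem : y (f l) ∈ S
        · have hba : b l ≠ a := fun h =>
            mem_free.1 hax (y l) (h ▸ hfan.mem_center l hl (hlj.trans hj))
          have hbg : b l ≠ g := fun h => hpar l hl hlj h hmem
          rwa [mem_free_kempeSwap hS hmem, Equiv.swap_apply_of_ne_of_ne hba hbg]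
        · rwa [free_kempeSwap_of_notMem hmem]
      mem_center := fun l hl hlj => by
        rw [kempeSwap_of_notMem hxS]
        exact hfan.mem_center l hl (hlj.trans hj) }
  refine hfan'.colorable_of_mem_free (hc.kempeSwap hS) (g := a) ?_ ?_
  · rwa [free_kempeSwap_of_notMem hxS]
  · rwa [mem_free_kempeSwap hS hyj, Equiv.swap_apply_left]

end Kempe

/-! ### Adding an edge to a colourable multigraph -/

section Extension

variable [Fintype V] [DecidableEq V]

theorem IsProperEdgeColoring.colorable_add_singleEdge_of_le_card_free
    (hc : IsProperEdgeColoring G k c) {x y₀ : V} (hxx : G x x = 0) (hxy : x ≠ y₀)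
    (hx : (free c x).Nonempty) (hz : ∀ z, z ≠ x → G x z ≤ (free c z).card)
    (hy : G x y₀ < (free c y₀).card) : Colorable (G + singleEdge x y₀) k := by
  by_contra hno
  obtain ⟨a, ha⟩ := hx
  have : NeZero k := ⟨fun hk => by subst hk; exact a.elim0⟩
  obtain ⟨t, y, f, b, hfan, rfl, hsat⟩ := IsFan.exists_saturated hc hxx hxy hno
  have hshift : ∀ j ≤ t, ∀ g, g ∈ free c x → g ∉ free c (y j) := fun j hj g hgx hgy =>
    hno ((hfan.mono hj).colorable_of_mem_free hc hgx hgy)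
  obtain ⟨i, hi, j, hj, hij, hgij⟩ := hfan.exists_not_disjoint_free hc hsat hz hy
  obtain ⟨g, hgi, hgj⟩ := not_disjoint_iff.1 hgij
  have hag : a ≠ g := fun h => hshift i hi a ha (h ▸ hgi)
  set K := kempeGraph c a g
  -- Some fan edge `x (y l)` has colour `g`, missing at `y (f l)`, and the `{a, g}`-chain
  -- through `y (f l)` avoids `x`: swap on that chain.
  by_cases hpar : ∃ l, 0 < l ∧ l ≤ t ∧ b l = g ∧ ¬ K.Reachable x (y (f l))
  · obtain ⟨l₀, hl₀, hl₀t, hbl₀, hnr⟩ := hpar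
    have hfl₀ := hfan.parent_lt l₀ hl₀ hl₀t
    refine hno (hfan.colorable_of_kempeSwap hc ha (isKempeClosed_reachable (y (f l₀)))
      (fun h => hnr h.symm) (by omega) (SimpleGraph.Reachable.refl _)
      (hbl₀ ▸ hfan.mem_free_parent l₀ hl₀ hl₀t) fun l hl hlj hbl _ => ?_)
    have := hfan.injOn l (by omega) l₀ hl₀t (hc.eq_of_mem (hbl ▸ hfan.mem_center l hl (by omega))
      (hbl₀ ▸ hfan.mem_center l₀ hl₀ hl₀t))
    omega
  -- Otherwise swap on the chain through whichever of `y i`, `y j` is not joined to `x`.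
  push Not at hpar
  have hne : ∀ m ≤ t, x ≠ y m := fun m hm => (hfan.ne_center m hm).symm
  obtain ⟨m, hm, hgm, hnr⟩ : ∃ m ≤ t, g ∈ free c (y m) ∧ ¬ K.Reachable x (y m) := by
    by_cases hri : K.Reachable x (y i)
    · exact ⟨j, hj, hgj, hc.not_reachable_of_mem_free hag (hne i hi) (hne j hj)
        (fun h => hij (hfan.injOn i hi j hj h)) ha hgi hgj hri⟩
    · exact ⟨i, hi, hgi, hri⟩
  exact hno (hfan.colorable_of_kempeSwap hc ha (isKempeClosed_reachable (y m))
    (fun h => hnr h.symm) hm (SimpleGraph.Reachable.refl _) hgm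
    fun l hl hlm hbl hr => hnr ((hpar l hl (hlm.trans hm) hbl).trans hr.symm))

theorem Colorable.of_sub_singleEdge {x y : V} (hG : IsMultigraph G) (hxy : 0 < G x y)
    (hcol : Colorable (G - singleEdge x y) k) (hx : mdeg G x ≤ k)
    (hz : ∀ z, z ≠ x → G x z + mdeg G z ≤ k) : Colorable G k := by
  have hne : x ≠ y := fun h => by rw [← h, hG.2] at hxy; omega
  set G' := G - singleEdge x y
  have hG' : G' + singleEdge x y = G := sub_singleEdge_add hG hxy
  have hdeg : ∀ z, mdeg G' z ≤ mdeg G z := fun z => by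
    rw [← hG', mdeg_add]; omega
  have hdx : mdeg G' x + 1 = mdeg G x := by
    rw [← hG', mdeg_add, mdeg_singleEdge_left]
  have hdy : mdeg G' y + 1 = mdeg G y := by
    rw [← hG', mdeg_add, singleEdge_comm, mdeg_singleEdge_left]
  have hxy' : G' x y + 1 = G x y := by
    rw [← hG', Pi.add_apply, Pi.add_apply, singleEdge, if_pos rfl]
  obtain ⟨c, hc⟩ := hcol
  rw [← hG']
  refine hc.colorable_add_singleEdge_of_le_card_free (by simp [G', hG.2]) hne ?_
    (fun z hzx => ?_) ?_
  · rw [← card_pos, hc.card_free]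
    omega
  · rw [hc.card_free]
    have := hz z hzx
    have := hdeg z
    have : G' x z ≤ G x z := Nat.sub_le _ _
    omega
  · rw [hc.card_free]
    have := hz y hne.symm
    omega

theorem colorable_of_mdeg_add_le {M : ℕ} (hG : IsMultigraph G) (v : V) (hv : mdeg G v ≤ k)
    (hdeg : ∀ u, u ≠ v → mdeg G u + M ≤ k) (hmul : ∀ u w, G u w ≤ M) : Colorable G k := by
  induction hE : ∑ u, mdeg G u using Nat.strong_induction_on generalizing G with
  | _ E ih =>
    by_cases hzero : ∀ u w, G u w = 0
    · rw [show G = 0 from funext₂ hzero]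
      exact colorable_zero k
    -- Delete the edges at `v` first: when `x ≠ v`, the vertex `v` is then isolated.
    obtain ⟨x, y, hxy, hxv⟩ : ∃ x y, 0 < G x y ∧ (x = v ∨ ∀ w, G v w = 0) := by
      by_cases hv0 : ∀ w, G v w = 0
      · push Not at hzero
        obtain ⟨x, y, h⟩ := hzero
        exact ⟨x, y, Nat.pos_of_ne_zero h, Or.inr hv0⟩
      · push Not at hv0
        obtain ⟨y, h⟩ := hv0
        exact ⟨v, y, Nat.pos_of_ne_zero h, Or.inl rfl⟩
    have hle : ∀ u w, (G - singleEdge x y) u w ≤ G u w := fun u w => Nat.sub_le _ _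
    have hdle : ∀ u, mdeg (G - singleEdge x y) u ≤ mdeg G u := fun u =>
      sum_le_sum fun w _ => hle u w
    have hlt : ∑ u, mdeg (G - singleEdge x y) u < E := hE ▸ sum_lt_sum (fun u _ => hdle u)
      ⟨x, mem_univ x, sum_lt_sum (fun w _ => hle x w) ⟨y, mem_univ y, by
        rw [Pi.sub_apply, Pi.sub_apply, singleEdge, if_pos rfl]
        omega⟩⟩
    have hG' := hG.sub (H := singleEdge x y) fun u w => by
      simp only [singleEdge, Sym2.eq_swap (a := u)]
    refine Colorable.of_sub_singleEdge hG hxy (ih _ hlt hG' ((hdle v).trans hv)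
      (fun u hu => (Nat.add_le_add_right (hdle u) M).trans (hdeg u hu))
      (fun u w => (hle u w).trans (hmul u w)) rfl) ?_ fun z hzx => ?_
    · rcases eq_or_ne x v with rfl | hx
      · exact hv
      · have := hdeg x hx
        omega
    · rcases eq_or_ne z v with rfl | hz
      · have hz0 := hxv.resolve_left hzx.symm
        have : mdeg G z = 0 := by simp [mdeg, hz0]
        rw [hG.1, hz0, this]
        exact Nat.zero_le k
      · have := hdeg z hz
        have := hmul x z
        omega

end Extension

/-! ### Complete multigraphs -/

section Complete

variable [DecidableEq V]

variable (V) in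
def completeMultigraph : V → V → ℕ := fun u v => if u = v then 0 else 1

/-- The truncated subtraction is exact: distinct vertices are joined by at least `μ_min(G)`
edges. -/
lemma sub_nsmul_completeMultigraph_add (hG : ∀ v, G v v = 0) :
    G - muMin G • completeMultigraph V + muMin G • completeMultigraph V = G := by
  ext u v
  by_cases h : u = v
  · simp [h, hG, completeMultigraph]
  · simp [completeMultigraph, h, Nat.sub_add_cancel (muMin_le h)]

variable [Fintype V]

lemma colorable_completeMultigraph_of_labelling (col : V → V → Fin k)
    (hsymm : ∀ u v, col u v = col v u)
    (hinj : ∀ z u w, u ≠ z → w ≠ z → col z u = col z w → u = w) :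
    Colorable (completeMultigraph V) k := by
  refine ⟨fun u v => if u = v then ∅ else {col u v}, fun u v => ?_, fun u v => ?_,
    fun z u w huw => ?_⟩
  · simp only [eq_comm (a := u), hsymm u v]
  · simp only [completeMultigraph]
    split_ifs <;> rfl
  · dsimp only
    by_cases hu : z = u
    · simp [hu]
    by_cases hw : z = w
    · simp [hw]
    rw [if_neg hu, if_neg hw]
    exact disjoint_singleton.2 fun h => huw (hinj z u w (Ne.symm hu) (Ne.symm hw) h)

lemma colorable_completeMultigraph_fin (n : ℕ) [NeZero n] :
    Colorable (completeMultigraph (Fin n)) n :=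
  colorable_completeMultigraph_of_labelling (· + ·) add_comm fun _ _ _ _ _ => add_left_cancel

/-- Writing `n = q + 1` with `q` odd: join the labelling `u + v` of `K_q` to the vertex
`last q` by the labels `u + u`, which are the labels missing at the vertices `u`. -/
lemma colorable_completeMultigraph_fin_of_even {n : ℕ} [NeZero n] (hn : Even n) :
    Colorable (completeMultigraph (Fin n)) (n - 1) := by
  obtain ⟨q, rfl⟩ := Nat.exists_eq_succ_of_ne_zero (NeZero.ne n)
  have hq : Odd q := Nat.not_even_iff_odd.1 (Nat.even_add_one.1 hn)
  rw [Nat.succ_sub_one]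
  have : NeZero q := ⟨by rintro rfl; exact Nat.not_odd_zero hq⟩
  let π : Fin (q + 1) → Fin q := fun x => Fin.ofNat q x.val
  have hπ : ∀ x x', x ≠ Fin.last q → x' ≠ Fin.last q → π x = π x' → x = x' := by
    intro x x' hx hx' h
    have := congrArg Fin.val h
    simp only [π, Fin.val_ofNat, Nat.mod_eq_of_lt (Fin.val_lt_last hx),
      Nat.mod_eq_of_lt (Fin.val_lt_last hx')] at this
    exact Fin.ext this
  have hdouble : ∀ p p' : Fin q, p + p = p' + p' → p = p' := by
    intro p p' h
    have := congrArg Fin.val h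
    simp only [Fin.val_add, ← two_mul] at this
    have := Nat.ModEq.cancel_left_of_coprime (Nat.coprime_two_right.2 hq) this
    exact Fin.ext (by rwa [Nat.ModEq, Nat.mod_eq_of_lt p.2, Nat.mod_eq_of_lt p'.2] at this)
  refine colorable_completeMultigraph_of_labelling
    (fun u v => π (if u = Fin.last q then v else u) + π (if v = Fin.last q then u else v))
    (fun u v => add_comm _ _) fun z u w hu hw h => ?_
  by_cases hz : z = Fin.last q
  · subst hz
    simp only [if_true, if_neg hu, if_neg hw] at h
    exact hπ u w hu hw (hdouble _ _ h)
  rw [if_neg hz, if_neg hz] at h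
  have h' := hπ _ _ (by split_ifs <;> assumption) (by split_ifs <;> assumption) (add_left_cancel h)
  split_ifs at h' with h₁ h₂ h₂
  · exact h₁.trans h₂.symm
  · exact absurd h'.symm hw
  · exact absurd h' hu
  · exact h'

lemma mdeg_completeMultigraph (z : V) : mdeg (completeMultigraph V) z = Fintype.card V - 1 := by
  simp [mdeg, completeMultigraph, sum_ite, filter_ne]

lemma mdeg_sub_nsmul_completeMultigraph_add (hG : ∀ v, G v v = 0) (u : V) :
    mdeg (G - muMin G • completeMultigraph V) u + muMin G * (Fintype.card V - 1) = mdeg G u := by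
  conv_rhs => rw [← sub_nsmul_completeMultigraph_add hG]
  rw [mdeg_add, mdeg_nsmul, mdeg_completeMultigraph]

theorem colorable_sub_nsmul_completeMultigraph (hG : IsMultigraph G) (v : V)
    (hv : mdeg G v = maxDeg G) (hlead : ∀ u, u ≠ v → mdeg G u + (muMax G - muMin G) ≤ maxDeg G) :
    Colorable (G - muMin G • completeMultigraph V)
      (maxDeg G - muMin G * (Fintype.card V - 1)) := by
  have hdeg := mdeg_sub_nsmul_completeMultigraph_add hG.2
  refine colorable_of_mdeg_add_le (M := muMax G - muMin G) (hG.sub fun u w => ?_) v ?_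
    (fun u hu => ?_) fun u w => ?_
  · simp [completeMultigraph, eq_comm]
  · have := hdeg v
    omega
  · have := hdeg u
    have := hlead u hu
    omega
  · by_cases h : u = w
    · simp [h, hG.2]
    · have := le_muMax (G := G) h
      have : (G - muMin G • completeMultigraph V) u w = G u w - muMin G := by
        simp [completeMultigraph, h]
      omega

end Complete

lemma exists_eq_sup_of_sorted {n : ℕ} [NeZero n] {F : Fin n → ℕ} {d : ℕ → ℕ}
    (hd : ∀ i j, i ≤ j → d j ≤ d i) (σ : Equiv.Perm (Fin n))
    (hσ : ∀ i, d (i.val + 1) = F (σ i)) :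
    ∃ v, F v = univ.sup F ∧ ∀ u, u ≠ v → F u + (d 1 - d 2) ≤ univ.sup F := by
  have hF : ∀ u, F u = d ((σ.symm u).val + 1) := fun u => by rw [hσ, σ.apply_symm_apply]
  have h0 : F (σ 0) = d 1 := by simpa using (hσ 0).symm
  have hsup : univ.sup F = d 1 :=
    (Finset.sup_le fun u _ => by rw [hF u]; exact hd _ _ (by omega)).antisymm (h0 ▸ le_sup (mem_univ _))
  refine ⟨σ 0, h0.trans hsup.symm, fun u hu => ?_⟩
  have h1 : 1 ≤ (σ.symm u).val := Nat.one_le_iff_ne_zero.2 fun h =>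
    hu (by rw [← σ.apply_symm_apply u]; congr 1; ext; simpa using h)
  have := hd 2 ((σ.symm u).val + 1) (by omega)
  have := hd 1 2 (by omega)
  rw [hsup, hF]
  omega

end GS

/-- **Corollary.** Let `G` be a loopless multigraph on `n` vertices with
ordered degree sequence `d 1 ≥ d 2 ≥ … ≥ d n`. If
`d 1 - d 2 ≥ μ(G) - μ_min(G) ≥ 2`, then `χ'(G) = Δ(G)` when `n` is even, and
`χ'(G) ≤ Δ(G) + μ_min(G)` when `n` is odd. -/
theorem chromIndex_of_large_degree_gap {n : ℕ}
    (G : Fin n → Fin n → ℕ) (hG : IsMultigraph G)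
    (d : ℕ → ℕ) (hd : ∀ i j, i ≤ j → d j ≤ d i)
    (hdseq : ∃ σ : Equiv.Perm (Fin n), ∀ i : Fin n, d (i.val + 1) = mdeg G (σ i))
    (hgap : (muMax G : ℤ) - (muMin G : ℤ) ≤ (d 1 : ℤ) - (d 2 : ℤ))
    (hmu : (2 : ℤ) ≤ (muMax G : ℤ) - (muMin G : ℤ)) :
    (Even n → chromIndex G = maxDeg G) ∧
    (Odd n → chromIndex G ≤ maxDeg G + muMin G) := by
  have hμ : muMax G ≠ 0 := by omega
  have : NeZero n := ⟨by rintro rfl; exact hμ (by simp [muMax])⟩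
  obtain ⟨σ, hσ⟩ := hdseq
  obtain ⟨v, hv, hlead⟩ : ∃ v, mdeg G v = maxDeg G ∧
      ∀ u, u ≠ v → mdeg G u + (d 1 - d 2) ≤ maxDeg G :=
    exists_eq_sup_of_sorted hd σ hσ
  have hH := colorable_sub_nsmul_completeMultigraph hG v hv fun u hu => by
    have := hlead u hu
    omega
  have hGH := sub_nsmul_completeMultigraph_add hG.2
  have hμK : muMin G * (n - 1) ≤ maxDeg G := by
    have := mdeg_sub_nsmul_completeMultigraph_add hG.2 v
    rw [Fintype.card_fin] at this
    omega
  rw [Fintype.card_fin] at hH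
  refine ⟨fun hn => ?_, fun _ => ?_⟩
  · have := hH.add ((colorable_completeMultigraph_fin_of_even hn).nsmul (muMin G))
    rw [hGH, Nat.sub_add_cancel hμK] at this
    exact chromIndex_eq_maxDeg this
  · have := hH.add ((colorable_completeMultigraph_fin n).nsmul (muMin G))
    rw [hGH] at this
    have hμn : muMin G * n = muMin G * (n - 1) + muMin G := by
      rw [← Nat.mul_add_one, Nat.sub_add_cancel NeZero.one_le]
    exact (chromIndex_le this).trans_eq (by omega)
end

section
/- Let m = m(n) = ω(n² log n) and let n be odd. Then with high probability (as n → ∞ through odd integers) M ~ M(n, m) satisfies ρ(M) = ρ([n]) = m/⌊n/2⌋ = 2m/(n−1); that is, the maximum of ρ(S) over all S ⊆ [n] with |S| ≥ 2 is attained by the full vertex set S = [n]. -/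
/-!
Call a multigraph on `n` vertices with `m` edges typical if every multiplicity is at most `3/2`
of its mean `m / (n choose 2)` and every degree at least `4/5` of its mean `2m/n`. In a typical
multigraph `e(S) (n - 1) ≤ m (|S| - 1)` for every nonempty `S`: when `|S| ≤ 2n/3` bound `e(S)`
pair by pair; otherwise write `e(S) = m + e(Sᶜ) - ∑_{v ∉ S} deg v` and use the degree bound on
the small complement. As `⌊|S|/2⌋ ≥ (|S| - 1)/2`, with equality for `S = [n]` when `n` is odd,
this gives `ρ(S) ≤ ρ([n])`.

`M(n, m)` is typical with probability at least `1 - 2/n` once `m ≥ 100 n² log n`: multiplicities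
and degrees count the rounds landing in a fixed set of pairs, so the exponential-moment bound
`P(X ≥ c) ≤ E θ^X / θ^c` (which factorises over the `m` independent rounds) and a union bound
over the pairs and vertices apply.
-/

open Finset Filter Asymptotics

section Chernoff

variable {α : Type*} [Fintype α] [DecidableEq α] {m : ℕ}

theorem sum_pow_card_filter_mem {R : Type*} [CommSemiring R] (Q : Finset α) (θ : R) :
    ∑ ω : Fin m → α, θ ^ #{i | ω i ∈ Q} = (θ * #Q + #Qᶜ) ^ m := by
  have hterm (ω : Fin m → α) :
      θ ^ #{i | ω i ∈ Q} = ∏ i, if ω i ∈ Q then θ else 1 := by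
    rw [Finset.prod_ite, Finset.prod_const, Finset.prod_const_one, mul_one]
  rw [Finset.sum_congr rfl fun ω _ => hterm ω,
    ← Fintype.sum_pow (fun x => if x ∈ Q then θ else 1)]
  congr 1
  rw [Finset.sum_ite, Finset.sum_const, Finset.sum_const, Finset.filter_mem_eq_inter,
    Finset.univ_inter, ← Finset.compl_filter, Finset.filter_mem_eq_inter, Finset.univ_inter]
  simp [mul_comm]

theorem card_filter_mul_le_of_le_pow [Nonempty α] (Q : Finset α) {θ : ℝ} (hθ : 0 < θ)
    (E : (Fin m → α) → Prop) [DecidablePred E] {a : ℝ}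
    (hE : ∀ ω, E ω → a ≤ θ ^ #{i | ω i ∈ Q}) :
    #{ω | E ω} * a ≤ Fintype.card α ^ m * Real.exp ((θ - 1) * #Q * m / Fintype.card α) := by
  set N : ℝ := (Fintype.card α : ℝ)
  have hN : 0 < N := by positivity
  have hbase : θ * #Q + #Qᶜ = N * (1 + (θ - 1) * #Q / N) := by
    rw [Finset.card_compl, Nat.cast_sub Q.card_le_univ]
    field_simp
    ring
  calc #{ω | E ω} * a = ∑ ω with E ω, a := by rw [Finset.sum_const, nsmul_eq_mul]
    _ ≤ ∑ ω with E ω, θ ^ #{i | ω i ∈ Q} :=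
        Finset.sum_le_sum fun ω hω => hE ω (Finset.mem_filter.mp hω).2
    _ ≤ ∑ ω : Fin m → α, θ ^ #{i | ω i ∈ Q} :=
        Finset.sum_le_sum_of_subset_of_nonneg (Finset.filter_subset _ _) fun _ _ _ => by positivity
    _ = (N * (1 + (θ - 1) * #Q / N)) ^ m := by rw [sum_pow_card_filter_mem, hbase]
    _ ≤ (N * Real.exp ((θ - 1) * #Q / N)) ^ m := by
        gcongr
        · exact hbase ▸ by positivity
        · linarith [Real.add_one_le_exp ((θ - 1) * #Q / N)]
    _ = N ^ m * Real.exp ((θ - 1) * #Q * m / N) := by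
        rw [mul_pow, ← Real.exp_nat_mul]
        ring_nf

end Chernoff

theorem Sym2.card_filter_eq_mk {α : Type*} [Fintype α] [DecidableEq α] (z : Sym2 α) (v : α) :
    #{u | z = s(v, u)} = if v ∈ z then 1 else 0 := by
  split_ifs with hv
  · obtain ⟨u, rfl⟩ := Sym2.mem_iff_exists.mp hv
    exact Finset.card_eq_one.mpr ⟨u, by
      ext w
      rw [Finset.mem_filter, Sym2.congr_right]
      simp [eq_comm]⟩
  · exact Finset.card_eq_zero.mpr <| Finset.filter_eq_empty_iff.mpr fun u _ hu =>
      hv (hu ▸ Sym2.mem_mk_left v u)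

theorem Real.exp_neg_nat_mul_log {x : ℝ} (hx : 0 < x) (k : ℕ) :
    Real.exp (-(k * Real.log x)) = (x ^ k)⁻¹ := by
  rw [Real.exp_neg, Real.exp_nat_mul, Real.exp_log hx]

theorem Nat.cast_div_two_of_odd {K : Type*} [Field K] [CharZero K] {n : ℕ} (hn : Odd n) :
    ((n / 2 : ℕ) : K) = (n - 1) / 2 := by
  have h : ((n / 2 * 2 + 1 : ℕ) : K) = n :=
    congrArg Nat.cast (Nat.div_two_mul_two_add_one_of_odd hn)
  push_cast at h
  rw [eq_div_iff two_ne_zero]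
  linear_combination h

namespace GS

section Multigraph

variable {V : Type*} [DecidableEq V] {G : V → V → ℕ}

theorem IsMultigraph.sum_sum_le (hG : IsMultigraph G) {B : ℝ}
    (hB : ∀ u v, u ≠ v → (G u v : ℝ) ≤ B) (S : Finset V) :
    (∑ v ∈ S, ∑ u ∈ S, (G v u : ℝ)) ≤ #S * (#S - 1) * B := by
  have hrow : ∀ v ∈ S, ∑ u ∈ S, (G v u : ℝ) ≤ (#S - 1) * B := by
    intro v hv
    rw [← Finset.sum_erase_add S _ hv, hG.2 v, Nat.cast_zero, add_zero]
    calc ∑ u ∈ S.erase v, (G v u : ℝ) ≤ #(S.erase v) • B :=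
          Finset.sum_le_card_nsmul _ _ _ fun u hu => hB v u (Finset.ne_of_mem_erase hu).symm
      _ = (#S - 1) * B := by
          rw [Finset.card_erase_of_mem hv, nsmul_eq_mul,
            Nat.cast_pred (Finset.card_pos.mpr ⟨v, hv⟩)]
  calc (∑ v ∈ S, ∑ u ∈ S, (G v u : ℝ)) ≤ ∑ _v ∈ S, (#S - 1) * B :=
        Finset.sum_le_sum hrow
    _ = #S * (#S - 1) * B := by rw [Finset.sum_const, nsmul_eq_mul, mul_assoc]

theorem IsMultigraph.sum_sum_add_two_mul_sum_compl_mdeg [Fintype V] (hG : IsMultigraph G)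
    (S : Finset V) :
    ∑ v ∈ S, ∑ u ∈ S, G v u + 2 * ∑ v ∈ Sᶜ, mdeg G v
      = ∑ v, mdeg G v + ∑ v ∈ Sᶜ, ∑ u ∈ Sᶜ, G v u := by
  have hsplit : ∀ v, mdeg G v = ∑ u ∈ S, G v u + ∑ u ∈ Sᶜ, G v u := fun v =>
    (Finset.sum_add_sum_compl S _).symm
  have hcross : ∑ v ∈ S, ∑ u ∈ Sᶜ, G v u = ∑ v ∈ Sᶜ, ∑ u ∈ S, G v u := by
    rw [Finset.sum_comm]
    exact Finset.sum_congr rfl fun v _ => Finset.sum_congr rfl fun u _ => hG.1 u v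
  rw [← Finset.sum_add_sum_compl S (mdeg G)]
  simp only [hsplit, Finset.sum_add_distrib, hcross]
  ring

def IsTypical [Fintype V] (G : V → V → ℕ) (m : ℕ) : Prop :=
  (∀ u v, u ≠ v → (G u v : ℝ) ≤ 3 * m / (Fintype.card V * (Fintype.card V - 1))) ∧
    ∀ v, 8 * m / (5 * Fintype.card V) ≤ (mdeg G v : ℝ)

theorem IsMultigraph.sum_sum_mul_le_of_three_mul_card_le [Fintype V] (hG : IsMultigraph G)
    {m : ℕ} (hV : 2 ≤ Fintype.card V)
    (hμ : ∀ u v, u ≠ v → (G u v : ℝ) ≤ 3 * m / (Fintype.card V * (Fintype.card V - 1)))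
    {S : Finset V} (hS : S.Nonempty) (hsmall : 3 * #S ≤ 2 * Fintype.card V) :
    (∑ v ∈ S, ∑ u ∈ S, (G v u : ℝ)) * (Fintype.card V - 1) ≤ 2 * m * (#S - 1) := by
  set n : ℝ := (Fintype.card V : ℝ)
  have hn : 2 ≤ n := by simp only [n]; exact_mod_cast hV
  have hs1 : 1 ≤ (#S : ℝ) := by exact_mod_cast hS.card_pos
  have hs : 3 * (#S : ℝ) ≤ 2 * n := by simp only [n]; exact_mod_cast hsmall
  calc (∑ v ∈ S, ∑ u ∈ S, (G v u : ℝ)) * (n - 1)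
      ≤ #S * (#S - 1) * (3 * m / (n * (n - 1))) * (n - 1) := by
        gcongr
        · linarith
        · exact hG.sum_sum_le hμ S
    _ = (#S - 1) * m * (3 * #S / n) := by
        field_simp [show n - 1 ≠ 0 by linarith]
    _ ≤ (#S - 1) * m * 2 := by
        gcongr
        rw [div_le_iff₀ (by linarith)]
        linarith
    _ = 2 * m * (#S - 1) := by ring

theorem IsMultigraph.sum_sum_mul_le_of_two_mul_card_lt [Fintype V] (hG : IsMultigraph G)
    {m : ℕ} (hV : 2 ≤ Fintype.card V) (hm : ∑ v, mdeg G v = 2 * m) (hT : IsTypical G m)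
    {S : Finset V} (hlarge : 2 * Fintype.card V < 3 * #S) :
    (∑ v ∈ S, ∑ u ∈ S, (G v u : ℝ)) * (Fintype.card V - 1) ≤ 2 * m * (#S - 1) := by
  have hid : (∑ v ∈ S, ∑ u ∈ S, (G v u : ℝ)) + 2 * ∑ v ∈ Sᶜ, (mdeg G v : ℝ)
      = 2 * (m : ℝ) + ∑ v ∈ Sᶜ, ∑ u ∈ Sᶜ, (G v u : ℝ) := by
    exact_mod_cast hm ▸ hG.sum_sum_add_two_mul_sum_compl_mdeg S
  set n : ℝ := (Fintype.card V : ℝ)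
  set t : ℝ := (#Sᶜ : ℝ)
  set inS : ℝ := ∑ v ∈ S, ∑ u ∈ S, (G v u : ℝ)
  set inT : ℝ := ∑ v ∈ Sᶜ, ∑ u ∈ Sᶜ, (G v u : ℝ)
  set degT : ℝ := ∑ v ∈ Sᶜ, (mdeg G v : ℝ)
  have hn : 2 ≤ n := by simp only [n]; exact_mod_cast hV
  have hst : (#S : ℝ) = n - t := by
    simp only [t, n, Finset.card_compl, Nat.cast_sub S.card_le_univ]
    ring
  have ht : 3 * t ≤ n - 1 := by
    have : 3 * #Sᶜ + 1 ≤ Fintype.card V := by rw [Finset.card_compl]; omega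
    have : 3 * t + 1 ≤ n := by simp only [t, n]; exact_mod_cast this
    linarith
  have hinT : inT * (n - 1) ≤ t * (t - 1) * (3 * m / n) := by
    calc inT * (n - 1) ≤ t * (t - 1) * (3 * m / (n * (n - 1))) * (n - 1) := by
          gcongr
          · linarith
          · exact hG.sum_sum_le hT.1 Sᶜ
      _ = t * (t - 1) * (3 * m / n) := by field_simp [show n - 1 ≠ 0 by linarith]
  have hdegT : t * (8 * m / (5 * n)) * (n - 1) ≤ degT * (n - 1) := by
    gcongr
    · linarith
    · simpa using Finset.card_nsmul_le_sum Sᶜ (fun v => (mdeg G v : ℝ)) _ fun v _ => hT.2 v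
  have hslack : 0 ≤ m * t / (5 * n) * (6 * n - 1 - 15 * t) :=
    mul_nonneg (by positivity) (by linarith)
  have hkey : t * (t - 1) * (3 * m / n) - 2 * (t * (8 * m / (5 * n)) * (n - 1)) + 2 * m * t
      = -(m * t / (5 * n) * (6 * n - 1 - 15 * t)) := by
    field_simp
    ring
  calc inS * (n - 1) = 2 * m * (n - 1) + inT * (n - 1) - 2 * (degT * (n - 1)) := by
        rw [eq_sub_of_add_eq hid]
        ring
    _ ≤ 2 * m * (#S - 1) := by
        rw [hst]
        linarith

theorem IsMultigraph.sum_sum_mul_le [Fintype V] (hG : IsMultigraph G) {m : ℕ}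
    (hV : 2 ≤ Fintype.card V) (hm : ∑ v, mdeg G v = 2 * m) (hT : IsTypical G m)
    {S : Finset V} (hS : S.Nonempty) :
    (∑ v ∈ S, ∑ u ∈ S, (G v u : ℝ)) * (Fintype.card V - 1) ≤ 2 * m * (#S - 1) := by
  rcases le_or_gt (3 * #S) (2 * Fintype.card V) with hsmall | hlarge
  · exact hG.sum_sum_mul_le_of_three_mul_card_le hV hT.1 hS hsmall
  · exact hG.sum_sum_mul_le_of_two_mul_card_lt hV hm hT hlarge

theorem rhoS_le_sum_sum_div {S : Finset V} (hS : 2 ≤ #S) :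
    rhoS G S ≤ (∑ v ∈ S, ∑ u ∈ S, (G v u : ℝ)) / (#S - 1) := by
  have hhalf : ((#S : ℝ) - 1) / 2 ≤ ((#S / 2 : ℕ) : ℝ) := by
    have h : #S - 1 ≤ #S / 2 * 2 := by omega
    have h' : ((#S - 1 : ℕ) : ℝ) ≤ ((#S / 2 * 2 : ℕ) : ℝ) := by exact_mod_cast h
    push_cast [Nat.cast_sub (by omega : 1 ≤ #S)] at h'
    linarith
  have hs : (2 : ℝ) ≤ #S := by exact_mod_cast hS
  calc rhoS G S ≤ ((∑ v ∈ S, ∑ u ∈ S, G v u : ℕ) / 2 : ℝ) / ((#S - 1) / 2) := by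
        unfold rhoS edgesIn
        gcongr
        · linarith
        · exact Nat.cast_div_le
    _ = (∑ v ∈ S, ∑ u ∈ S, (G v u : ℝ)) / (#S - 1) := by
        push_cast
        field_simp

theorem rho_eq_rhoS_univ_of_forall_le [Fintype V] (hV : 2 ≤ Fintype.card V)
    (h : ∀ S : Finset V, 2 ≤ #S → rhoS G S ≤ rhoS G univ) : rho G = rhoS G univ :=
  IsGreatest.csSup_eq
    ⟨⟨univ, by rwa [Finset.card_univ], rfl⟩, by rintro _ ⟨S, hS, rfl⟩; exact h S hS⟩

theorem rhoS_univ_of_odd [Fintype V] (hV : Odd (Fintype.card V)) :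
    rhoS G univ = 2 * edgesIn G univ / (Fintype.card V - 1) := by
  rw [rhoS, Finset.card_univ, Nat.cast_div_two_of_odd hV, div_div_eq_mul_div, mul_comm]

theorem edgesIn_univ_of_sum_mdeg [Fintype V] {m : ℕ} (hm : ∑ v, mdeg G v = 2 * m) :
    edgesIn G univ = m := by
  change (∑ v, mdeg G v) / 2 = m
  omega

theorem IsMultigraph.rho_eq_rhoS_univ [Fintype V] (hG : IsMultigraph G) {m : ℕ}
    (hodd : Odd (Fintype.card V)) (hV : 2 ≤ Fintype.card V) (hm : ∑ v, mdeg G v = 2 * m)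
    (hT : IsTypical G m) :
    rho G = rhoS G univ := by
  have hn : (1 : ℝ) < Fintype.card V := by exact_mod_cast hV
  refine rho_eq_rhoS_univ_of_forall_le hV fun S hS => ?_
  rw [rhoS_univ_of_odd hodd, edgesIn_univ_of_sum_mdeg hm]
  have hs : (1 : ℝ) < #S := by exact_mod_cast hS
  calc rhoS G S ≤ (∑ v ∈ S, ∑ u ∈ S, (G v u : ℝ)) / (#S - 1) := rhoS_le_sum_sum_div hS
    _ ≤ 2 * m / (Fintype.card V - 1) := by
        rw [div_le_div_iff₀ (by linarith) (by linarith)]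
        exact hG.sum_sum_mul_le hV hm hT (Finset.card_pos.mp (by omega))

end Multigraph

section RandomMultigraph

variable {n m : ℕ}

theorem isMultigraph_mgGraph (ω : MGOutcome n m) : IsMultigraph (mgGraph ω) := by
  refine ⟨fun u v => by simp only [mgGraph, Sym2.eq_swap], fun v => ?_⟩
  exact Finset.card_eq_zero.mpr <| Finset.filter_eq_empty_iff.mpr fun i _ hi =>
    (ω i).2 (hi ▸ Sym2.mk_isDiag_iff.mpr rfl)

theorem mgGraph_eq_pairCount (ω : MGOutcome n m) {u v : Fin n} (huv : u ≠ v) :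
    mgGraph ω u v = pairCount ω ⟨s(u, v), Sym2.mk_isDiag_iff.not.mpr huv⟩ := by
  simp only [mgGraph, pairCount, Subtype.ext_iff]

theorem mdeg_mgGraph (ω : MGOutcome n m) (v : Fin n) :
    mdeg (mgGraph ω) v = #{i | v ∈ (ω i : Sym2 (Fin n))} := by
  calc ∑ u, #{i | (ω i : Sym2 (Fin n)) = s(v, u)}
      = ∑ i, #{u | (ω i : Sym2 (Fin n)) = s(v, u)} :=
        Finset.sum_card_bipartiteAbove_eq_sum_card_bipartiteBelow _
    _ = ∑ i, if v ∈ (ω i : Sym2 (Fin n)) then 1 else 0 := by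
        simp only [Sym2.card_filter_eq_mk]
    _ = #{i | v ∈ (ω i : Sym2 (Fin n))} := (Finset.card_filter _ _).symm

theorem sum_mdeg_mgGraph (ω : MGOutcome n m) : ∑ v, mdeg (mgGraph ω) v = 2 * m := by
  calc ∑ v, mdeg (mgGraph ω) v = ∑ v, #{i | v ∈ (ω i : Sym2 (Fin n))} := by
        simp only [mdeg_mgGraph]
    _ = ∑ i, #{v | v ∈ (ω i : Sym2 (Fin n))} :=
        Finset.sum_card_bipartiteAbove_eq_sum_card_bipartiteBelow _
    _ = ∑ _i : Fin m, 2 := by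
        refine Finset.sum_congr rfl fun i _ => ?_
        rw [← Sym2.card_toFinset_of_not_isDiag _ (ω i).2]
        congr 1
        ext v
        simp [Sym2.mem_toFinset]
    _ = 2 * m := by simp [mul_comm]

theorem rhoS_univ_mgGraph (ω : MGOutcome n m) :
    rhoS (mgGraph ω) univ = m / ((n / 2 : ℕ) : ℝ) := by
  rw [rhoS, edgesIn_univ_of_sum_mdeg (sum_mdeg_mgGraph ω), Finset.card_univ, Fintype.card_fin]

end RandomMultigraph

section Probability

variable {n m : ℕ}

theorem card_ndPair (n : ℕ) : (Fintype.card (NDPair n) : ℝ) = n * (n - 1) / 2 := by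
  rw [Sym2.card_subtype_not_diag, Fintype.card_fin, Nat.cast_choose_two]

theorem le_card_filter_mem_ndPair (v : Fin n) :
    n - 1 ≤ #{p : NDPair n | v ∈ (p : Sym2 (Fin n))} := by
  have h := Finset.card_le_card_of_injOn (s := (univ : Finset {u : Fin n // u ≠ v}))
    (t := {p : NDPair n | v ∈ (p : Sym2 (Fin n))})
    (fun u => (⟨s(v, u), Sym2.mk_isDiag_iff.not.mpr u.2.symm⟩ : NDPair n))
    (fun u _ => by simp)
    (fun a _ b _ hab => Subtype.ext (Sym2.congr_right.mp (congrArg Subtype.val hab)))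
  simpa [Fintype.card_subtype_compl] using h

theorem mgProb_eq_card_div (P : MGOutcome n m → Prop) [DecidablePred P] :
    mgProb n m P = #{ω | P ω} / (Fintype.card (NDPair n) : ℝ) ^ m := by
  rw [mgProb, Nat.card_eq_fintype_card, Nat.card_eq_fintype_card, Fintype.card_subtype,
    Fintype.card_fun, Fintype.card_fin]
  push_cast
  rfl

theorem mgProb_le_one (P : MGOutcome n m → Prop) : mgProb n m P ≤ 1 := by
  classical
  rw [mgProb_eq_card_div]
  refine div_le_one_of_le₀ ?_ (by positivity)
  calc (#{ω | P ω} : ℝ) ≤ #(univ : Finset (MGOutcome n m)) := by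
        exact_mod_cast Finset.card_filter_le _ _
    _ = (Fintype.card (NDPair n) : ℝ) ^ m := by simp

theorem mgProb_mono {P P' : MGOutcome n m → Prop} (h : ∀ ω, P ω → P' ω) :
    mgProb n m P ≤ mgProb n m P' := by
  classical
  rw [mgProb_eq_card_div, mgProb_eq_card_div]
  gcongr
  exact h _

theorem mgProb_add_mgProb_not (hn : 2 ≤ n) (P : MGOutcome n m → Prop) :
    mgProb n m P + mgProb n m (fun ω => ¬ P ω) = 1 := by
  classical
  have hn' : (2 : ℝ) ≤ n := by exact_mod_cast hn
  have hN : (0 : ℝ) < Fintype.card (NDPair n) := by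
    rw [card_ndPair]
    exact div_pos (mul_pos (by linarith) (by linarith)) two_pos
  rw [mgProb_eq_card_div, mgProb_eq_card_div, ← add_div, ← Nat.cast_add,
    Finset.card_filter_add_card_filter_not, Finset.card_univ, Fintype.card_fun, Fintype.card_fin]
  push_cast
  exact div_self (pow_pos hN m).ne'

theorem mgProb_exists_le_sum {ι : Type*} [Fintype ι] (A : ι → MGOutcome n m → Prop) :
    mgProb n m (fun ω => ∃ j, A j ω) ≤ ∑ j, mgProb n m (A j) := by
  classical
  simp only [mgProb_eq_card_div, ← Finset.sum_div]
  gcongr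
  calc (#{ω | ∃ j, A j ω} : ℝ) ≤ #(univ.biUnion fun j => {ω | A j ω}) := by
        gcongr
        intro ω hω
        simpa using hω
    _ ≤ ∑ j, (#{ω | A j ω} : ℝ) := by exact_mod_cast Finset.card_biUnion_le

theorem mgProb_or_le (P P' : MGOutcome n m → Prop) :
    mgProb n m (fun ω => P ω ∨ P' ω) ≤ mgProb n m P + mgProb n m P' := by
  classical
  simp only [mgProb_eq_card_div, ← add_div]
  gcongr
  rw [Finset.filter_or]
  exact_mod_cast Finset.card_union_le _ _

theorem mgProb_le_exp [Nonempty (NDPair n)] (Q : Finset (NDPair n)) {θ : ℝ} (hθ : 0 < θ)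
    (P : MGOutcome n m → Prop) {c : ℝ}
    (hP : ∀ ω, P ω → c * Real.log θ ≤ #{i | ω i ∈ Q} * Real.log θ) :
    mgProb n m P ≤
      Real.exp ((θ - 1) * #Q * m / Fintype.card (NDPair n) - c * Real.log θ) := by
  classical
  have hcount := card_filter_mul_le_of_le_pow Q hθ P (a := Real.exp (c * Real.log θ))
    fun ω hω => by
      rw [← Real.rpow_natCast, Real.rpow_def_of_pos hθ, mul_comm (Real.log θ)]
      exact Real.exp_le_exp.mpr (hP ω hω)
  rw [mgProb_eq_card_div, Real.exp_sub, div_le_div_iff₀ (by positivity) (Real.exp_pos _)]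
  linarith

theorem mgProb_lt_pairCount_le (p : NDPair n) (c : ℝ) :
    mgProb n m (fun ω => c < pairCount ω p) ≤
      Real.exp (m / Fintype.card (NDPair n) - c * Real.log 2) := by
  have : Nonempty (NDPair n) := ⟨p⟩
  have h := mgProb_le_exp {p} two_pos (fun ω : MGOutcome n m => c < pairCount ω p)
    fun ω hω => by
      have hcount : #{i | ω i ∈ ({p} : Finset (NDPair n))} = pairCount ω p := by
        simp [pairCount]
      rw [hcount]
      exact mul_le_mul_of_nonneg_right hω.le (Real.log_nonneg one_le_two)
  refine h.trans_eq ?_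
  rw [Finset.card_singleton]
  ring_nf

theorem mgProb_mdeg_lt_le (hn : 2 ≤ n) (v : Fin n) (c : ℝ) :
    mgProb n m (fun ω => (mdeg (mgGraph ω) v : ℝ) < c) ≤
      Real.exp (-(m / (3 * n)) - c * Real.log (5 / 6)) := by
  set Q : Finset (NDPair n) := {p | v ∈ (p : Sym2 (Fin n))}
  have hQ : n - 1 ≤ #Q := le_card_filter_mem_ndPair v
  have : Nonempty (NDPair n) := by
    obtain ⟨p, -⟩ := Finset.card_pos.mp (show 0 < #Q by omega)
    exact ⟨p⟩
  have h := mgProb_le_exp Q (by norm_num : (0 : ℝ) < 5 / 6)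
    (fun ω : MGOutcome n m => (mdeg (mgGraph ω) v : ℝ) < c) fun ω hω => by
      have hcount : #{i | ω i ∈ Q} = mdeg (mgGraph ω) v := by simp [Q, mdeg_mgGraph]
      rw [hcount]
      exact mul_le_mul_of_nonpos_right hω.le (Real.log_nonpos (by norm_num) (by norm_num))
  refine h.trans (Real.exp_le_exp.mpr (sub_le_sub_right ?_ _))
  have hn' : (2 : ℝ) ≤ n := by exact_mod_cast hn
  have hQ' : (n : ℝ) - 1 ≤ #Q := by
    have : ((n - 1 : ℕ) : ℝ) ≤ #Q := by exact_mod_cast hQ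
    rwa [Nat.cast_sub (by omega), Nat.cast_one] at this
  rw [card_ndPair, show (5 / 6 - 1 : ℝ) * #Q * m / (n * (n - 1) / 2)
    = -(#Q * m / (3 * n * (n - 1))) by field_simp; ring, neg_le_neg_iff,
    div_le_div_iff₀ (by positivity) (by nlinarith)]
  nlinarith [mul_le_mul_of_nonneg_left hQ' (by positivity : (0 : ℝ) ≤ 3 * n * m)]

theorem sum_mgProb_lt_pairCount_le (hn : 2 ≤ n) (hm : 100 * (n : ℝ) ^ 2 * Real.log n ≤ m) :
    ∑ p : NDPair n, mgProb n m (fun ω => 3 * m / (n * (n - 1)) < (pairCount ω p : ℝ))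
      ≤ 1 / n := by
  have hn' : (2 : ℝ) ≤ n := by exact_mod_cast hn
  have hlog : 0 ≤ Real.log n := Real.log_nonneg (by linarith)
  have hL : 100 * Real.log n ≤ m / (n * (n - 1)) := by
    rw [le_div_iff₀ (by nlinarith)]
    nlinarith [mul_nonneg hlog (by linarith : (0 : ℝ) ≤ n)]
  have hexp : m / Fintype.card (NDPair n) - 3 * m / (n * (n - 1)) * Real.log 2
      ≤ -((4 : ℕ) * Real.log n) := by
    have hn1 : (n : ℝ) - 1 ≠ 0 := by linarith
    rw [card_ndPair, show (m : ℝ) / (n * (n - 1) / 2) - 3 * m / (n * (n - 1)) * Real.log 2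
      = m / (n * (n - 1)) * (2 - 3 * Real.log 2) by field_simp]
    push_cast
    nlinarith [Real.log_two_gt_d9]
  calc ∑ p : NDPair n, mgProb n m (fun ω => 3 * m / (n * (n - 1)) < (pairCount ω p : ℝ))
      ≤ ∑ _p : NDPair n, Real.exp (-((4 : ℕ) * Real.log n)) := by
        refine Finset.sum_le_sum fun p _ => (mgProb_lt_pairCount_le p _).trans ?_
        exact Real.exp_le_exp.mpr hexp
    _ = n * (n - 1) / 2 * ((n : ℝ) ^ 4)⁻¹ := by
        rw [Finset.sum_const, Finset.card_univ, nsmul_eq_mul, card_ndPair,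
          Real.exp_neg_nat_mul_log (by linarith)]
    _ ≤ 1 / n := by
        rw [← div_eq_mul_inv, div_le_div_iff₀ (by positivity) (by linarith)]
        nlinarith [pow_le_pow_left₀ (by norm_num) hn' 3]

theorem sum_mgProb_mdeg_lt_le (hn : 2 ≤ n) (hm : 100 * (n : ℝ) ^ 2 * Real.log n ≤ m) :
    ∑ v : Fin n, mgProb n m (fun ω => (mdeg (mgGraph ω) v : ℝ) < 8 * m / (5 * n))
      ≤ 1 / n := by
  have hn' : (2 : ℝ) ≤ n := by exact_mod_cast hn
  have hlog : 0 ≤ Real.log n := Real.log_nonneg (by linarith)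
  have hlog56 : -(1 / 5) ≤ Real.log (5 / 6) := by
    have := Real.one_sub_inv_le_log_of_pos (by norm_num : (0 : ℝ) < 5 / 6)
    norm_num at this ⊢
    linarith
  have hexp :
      -(m / (3 * n)) - 8 * m / (5 * n) * Real.log (5 / 6) ≤ -((2 : ℕ) * Real.log n) := by
    have hmn : 150 * Real.log n ≤ m / n := by
      rw [le_div_iff₀ (by linarith)]
      nlinarith [mul_nonneg hlog (by linarith : (0 : ℝ) ≤ n)]
    have hpos : (0 : ℝ) ≤ m / n := by positivity
    rw [show -((m : ℝ) / (3 * n)) - 8 * m / (5 * n) * Real.log (5 / 6)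
      = -(m / n) * (1 / 3 + 8 / 5 * Real.log (5 / 6)) by ring]
    push_cast
    nlinarith
  calc ∑ v : Fin n, mgProb n m (fun ω => (mdeg (mgGraph ω) v : ℝ) < 8 * m / (5 * n))
      ≤ ∑ _v : Fin n, Real.exp (-((2 : ℕ) * Real.log n)) :=
        Finset.sum_le_sum fun v _ => (mgProb_mdeg_lt_le hn v _).trans (Real.exp_le_exp.mpr hexp)
    _ = n * ((n : ℝ) ^ 2)⁻¹ := by
        rw [Finset.sum_const, Finset.card_univ, Fintype.card_fin, nsmul_eq_mul,
          Real.exp_neg_nat_mul_log (by linarith)]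
    _ = 1 / n := by field_simp

theorem one_sub_two_div_le_mgProb_isTypical (hn : 2 ≤ n)
    (hm : 100 * (n : ℝ) ^ 2 * Real.log n ≤ m) :
    1 - 2 / n ≤ mgProb n m (fun ω => IsTypical (mgGraph ω) m) := by
  have hbad : ∀ ω : MGOutcome n m, ¬ IsTypical (mgGraph ω) m →
      (∃ p, 3 * m / (n * (n - 1)) < (pairCount ω p : ℝ)) ∨
        ∃ v, (mdeg (mgGraph ω) v : ℝ) < 8 * m / (5 * n) := by
    intro ω hω
    simp only [IsTypical, Fintype.card_fin, not_and_or, not_forall, not_le] at hω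
    rcases hω with ⟨u, v, huv, hμ⟩ | ⟨v, hδ⟩
    · exact Or.inl ⟨_, mgGraph_eq_pairCount ω huv ▸ hμ⟩
    · exact Or.inr ⟨v, hδ⟩
  have hsum := mgProb_add_mgProb_not hn (fun ω : MGOutcome n m => IsTypical (mgGraph ω) m)
  have hprob : mgProb n m (fun ω => ¬ IsTypical (mgGraph ω) m) ≤ 1 / n + 1 / n := calc
    mgProb n m (fun ω => ¬ IsTypical (mgGraph ω) m)
      ≤ mgProb n m (fun ω => (∃ p, 3 * m / (n * (n - 1)) < (pairCount ω p : ℝ)) ∨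
          ∃ v, (mdeg (mgGraph ω) v : ℝ) < 8 * m / (5 * n)) := mgProb_mono hbad
    _ ≤ 1 / n + 1 / n :=
        (mgProb_or_le _ _).trans <| add_le_add
          ((mgProb_exists_le_sum _).trans (sum_mgProb_lt_pairCount_le hn hm))
          ((mgProb_exists_le_sum _).trans (sum_mgProb_mdeg_lt_le hn hm))
  rw [show (2 : ℝ) / n = 1 / n + 1 / n by ring]
  linarith

end Probability

end GS

open GS Filter

/-- **Claim.** Let `m = ω(n² log n)` and `n` odd. Then w.h.p. (through odd `n`)
`M ~ M(n, m)` satisfies `ρ(M) = ρ([n]) = m / ⌊n/2⌋ = 2m/(n-1)`: the maximum of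
`ρ(S)` is attained at the full vertex set. -/
theorem random_multigraph_rho_full (m : ℕ → ℕ)
    (hm : Tendsto (fun n : ℕ => (m n : ℝ) / ((n : ℝ) ^ 2 * Real.log n))
      (atTop ⊓ Filter.principal {n : ℕ | Odd n}) atTop) :
    Tendsto (fun n => mgProb n (m n) (fun ω =>
        rho (mgGraph ω) = rhoS (mgGraph ω) Finset.univ ∧
        rhoS (mgGraph ω) Finset.univ = (m n : ℝ) / ((n / 2 : ℕ) : ℝ) ∧
        (m n : ℝ) / ((n / 2 : ℕ) : ℝ) = 2 * (m n : ℝ) / ((n : ℝ) - 1)))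
      (atTop ⊓ Filter.principal {n : ℕ | Odd n}) (nhds 1) := by
  have hodd : ∀ᶠ n : ℕ in atTop ⊓ Filter.principal {n | Odd n}, Odd n :=
    eventually_inf_principal.mpr (Eventually.of_forall fun _ hn => hn)
  have htwo : ∀ᶠ n : ℕ in atTop ⊓ Filter.principal {n | Odd n}, 2 ≤ n :=
    (eventually_ge_atTop 2).filter_mono inf_le_left
  have hdense : ∀ᶠ n : ℕ in atTop ⊓ Filter.principal {n | Odd n},
      100 * (n : ℝ) ^ 2 * Real.log n ≤ m n := by
    filter_upwards [htwo, hm.eventually_ge_atTop 100] with n hn h100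
    have hpos : 0 < (n : ℝ) ^ 2 * Real.log n :=
      mul_pos (by positivity) (Real.log_pos (by exact_mod_cast hn))
    rwa [le_div_iff₀ hpos, ← mul_assoc] at h100
  have hlower : Tendsto (fun n : ℕ => 1 - 2 / (n : ℝ)) atTop (nhds 1) := by
    simpa using tendsto_const_nhds.sub (tendsto_const_div_atTop_nhds_zero_nat (2 : ℝ))
  refine tendsto_of_tendsto_of_tendsto_of_le_of_le' (hlower.mono_left inf_le_left)
    tendsto_const_nhds ?_ (Eventually.of_forall fun n => mgProb_le_one _)
  filter_upwards [hodd, htwo, hdense] with n hodd hn hdense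
  refine (one_sub_two_div_le_mgProb_isTypical hn hdense).trans (mgProb_mono fun ω hω => ?_)
  refine ⟨(isMultigraph_mgGraph ω).rho_eq_rhoS_univ (by simpa) (by simpa)
    (sum_mdeg_mgGraph ω) hω, rhoS_univ_mgGraph ω, ?_⟩
  rw [Nat.cast_div_two_of_odd hodd, div_div_eq_mul_div, mul_comm]
end
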